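/- arXiv:0809.3813 — 3 statements merged into one kernel-verified Lean document; each statement's English description precedes it below -/
import Mathlib

section
/- For every dimension d ≥ 1, every integer t ≥ 1, and every nonempty finite subset X of U(d), equality holds in (1/|X|²) · ∑_{U,V ∈ X} |tr(U*V)|^{2t} ≥ ∫_{U(d)} |tr(U)|^{2t} dU if and only if X is a unitary t-design. -/
open MeasureTheory

noncomputable section

/-- `U(d)`: the group of `d × d` complex unitary matrices. -/
abbrev UG (d : ℕ) := Matrix.unitaryGroup (Fin d) ℂ

instance (d : ℕ) : MeasurableSpace (UG d) := borel _
instance (d : ℕ) : BorelSpace (UG d) := ⟨rfl⟩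

/-- `Hom(r,s)`: the complex span of the monomial functions on `U(d)` that are homogeneous of
degree `r` in the entries of `U` and of degree `s` in the entries of `U*` (conjugates). -/
def homSpace (d r s : ℕ) : Submodule ℂ (UG d → ℂ) :=
  Submodule.span ℂ
    {f : UG d → ℂ | ∃ (i j : Fin r → Fin d) (p q : Fin s → Fin d),
      f = fun U : UG d => (∏ k, (U : Matrix (Fin d) (Fin d) ℂ) (i k) (j k)) *
        ∏ k, (starRingEnd ℂ) ((U : Matrix (Fin d) (Fin d) ℂ) (p k) (q k))}

/-- A nonempty finite subset `X ⊆ U(d)` is a unitary `t`-design (with respect to the Haar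
probability measure `μ`) if it averages every `f ∈ Hom(t,t)` correctly. -/
def IsUnitaryDesign (d t : ℕ) (μ : Measure (UG d)) (X : Finset (UG d)) : Prop :=
  X.Nonempty ∧ ∀ f ∈ homSpace d t t,
    (1 / (X.card : ℂ)) * ∑ U ∈ X, f U = ∫ U, f U ∂μ

/-- `|tr(U* M)|²`, the squared trace inner product of two unitaries. -/
def trIP {d : ℕ} (U M : UG d) : ℝ :=
  ‖(Matrix.trace (star (U : Matrix (Fin d) (Fin d) ℂ) *
    (M : Matrix (Fin d) (Fin d) ℂ)))‖ ^ 2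

/-
Let `v(U)` be the vector of all degree-`(t, t)` monomials in the entries of `U`, i.e. the
vectorisation of `U^{⊗t} ⊗ Ū^{⊗t}`; then `⟪v(U), v(V)⟫ = |tr(U*V)|^{2t}`. Let `a` be the average
of `v` over `X` and `m` its Haar mean. Left invariance of the Haar measure makes
`⟪v(U), m⟫ = ∫ |tr W|^{2t} dW` independent of `U`, so `‖a - m‖²` is exactly the left-hand side
minus the Haar integral. Hence equality holds iff `a = m`, i.e. iff `X` averages every monomial,
and so every element of `Hom(t, t)`, correctly.
-/

open scoped ComplexConjugate InnerProductSpace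

section FramePotential

variable {α 𝕜 E : Type*} [RCLike 𝕜] [NormedAddCommGroup E] [InnerProductSpace 𝕜 E]

open RCLike

lemma norm_average_sq (v : α → E) (X : Finset α) :
    ‖(1 / (X.card : 𝕜)) • ∑ a ∈ X, v a‖ ^ 2 =
      1 / (X.card : ℝ) ^ 2 * ∑ a ∈ X, ∑ b ∈ X, re ⟪v a, v b⟫_𝕜 := by
  rw [norm_smul, mul_pow, ← inner_self_eq_norm_sq (x := ∑ a ∈ X, v a) (𝕜 := 𝕜), sum_inner]
  simp_rw [inner_sum, map_sum, norm_div, norm_one, RCLike.norm_natCast, div_pow, one_pow]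

variable [MeasurableSpace α] [CompleteSpace E] [NormedSpace ℝ E] {μ : Measure α}
  [IsProbabilityMeasure μ] {v : α → E}

lemma norm_average_sub_integral_sq (hv : Integrable v μ) {c : ℝ}
    (hc : ∀ a, ⟪v a, ∫ b, v b ∂μ⟫_𝕜 = c) {X : Finset α} (hX : X.Nonempty) :
    ‖(1 / (X.card : 𝕜)) • ∑ a ∈ X, v a - ∫ a, v a ∂μ‖ ^ 2 =
      ‖(1 / (X.card : 𝕜)) • ∑ a ∈ X, v a‖ ^ 2 - c := by
  have hcard : (X.card : 𝕜) ≠ 0 := Nat.cast_ne_zero.2 hX.card_pos.ne'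
  have h_avg : ⟪(1 / (X.card : 𝕜)) • ∑ a ∈ X, v a, ∫ a, v a ∂μ⟫_𝕜 = c := by
    simp_rw [inner_smul_left, sum_inner, hc, Finset.sum_const, nsmul_eq_mul, map_div₀, map_one,
      map_natCast]
    field_simp
  have h_mean : ⟪∫ a, v a ∂μ, ∫ a, v a ∂μ⟫_𝕜 = c := by
    simp_rw [← integral_inner hv, ← inner_conj_symm (∫ a, v a ∂μ), hc, conj_ofReal,
      integral_const, probReal_univ, one_smul]
  rw [norm_sub_sq (𝕜 := 𝕜), h_avg, ← inner_self_eq_norm_sq (𝕜 := 𝕜) (x := ∫ a, v a ∂μ), h_mean,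
    ofReal_re]
  ring

lemma average_eq_integral_iff (hv : Integrable v μ) {c : ℝ}
    (hc : ∀ a, ⟪v a, ∫ b, v b ∂μ⟫_𝕜 = c) {X : Finset α} (hX : X.Nonempty) :
    (1 / (X.card : 𝕜)) • ∑ a ∈ X, v a = ∫ a, v a ∂μ ↔
      1 / (X.card : ℝ) ^ 2 * ∑ a ∈ X, ∑ b ∈ X, re ⟪v a, v b⟫_𝕜 = c := by
  rw [← sub_eq_zero, ← norm_eq_zero, ← sq_eq_zero_iff, norm_average_sub_integral_sq hv hc hX,
    norm_average_sq, sub_eq_zero]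

end FramePotential

section Averages

variable {α 𝕜 : Type*} [RCLike 𝕜] [MeasurableSpace α] {μ : Measure α}

lemma forall_mem_span_average_eq_integral_iff {S : Set (α → 𝕜)}
    (hS : ∀ f ∈ S, Integrable f μ) (X : Finset α) :
    (∀ f ∈ Submodule.span 𝕜 S, (1 / (X.card : 𝕜)) * ∑ a ∈ X, f a = ∫ a, f a ∂μ) ↔
      ∀ f ∈ S, (1 / (X.card : 𝕜)) * ∑ a ∈ X, f a = ∫ a, f a ∂μ := by
  refine ⟨fun h f hf => h f (Submodule.subset_span hf), fun h f hf => ?_⟩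
  refine (Submodule.span_induction (p := fun g _ => Integrable g μ ∧
    (1 / (X.card : 𝕜)) * ∑ a ∈ X, g a = ∫ a, g a ∂μ) (fun g hg => ⟨hS g hg, h g hg⟩)
    ⟨integrable_zero _ _ _, by simp⟩ ?_ ?_ hf).2
  · rintro g g' - - ⟨hg, hg_eq⟩ ⟨hg', hg'_eq⟩
    refine ⟨hg.add hg', ?_⟩
    simp only [Pi.add_apply, Finset.sum_add_distrib, mul_add, hg_eq, hg'_eq, integral_add hg hg']
  · rintro c g - ⟨hg, hg_eq⟩
    refine ⟨hg.smul c, ?_⟩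
    simp only [Pi.smul_apply, smul_eq_mul, ← Finset.mul_sum, integral_const_mul, ← hg_eq]
    ring

end Averages

namespace UnitaryDesign

variable {d t : ℕ}

abbrev MonomialIndex (d t : ℕ) := (Fin t → Fin d × Fin d) × (Fin t → Fin d × Fin d)

def monomial (x : MonomialIndex d t) (U : UG d) : ℂ :=
  (∏ k, (U : Matrix (Fin d) (Fin d) ℂ).vec (x.1 k)) *
    ∏ k, conj ((U : Matrix (Fin d) (Fin d) ℂ).vec (x.2 k))

lemma homSpace_eq_span_monomial :
    homSpace d t t = Submodule.span ℂ (Set.range (monomial (t := t))) := by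
  refine congrArg (Submodule.span ℂ) (Set.ext fun f => ⟨?_, ?_⟩)
  · rintro ⟨i, j, p, q, rfl⟩
    exact ⟨(fun k => (j k, i k), fun k => (q k, p k)), rfl⟩
  · rintro ⟨x, rfl⟩
    exact ⟨fun k => (x.1 k).2, fun k => (x.1 k).1, fun k => (x.2 k).2, fun k => (x.2 k).1, rfl⟩

lemma norm_monomial_le_one (x : MonomialIndex d t) (U : UG d) : ‖monomial x U‖ ≤ 1 := by
  have h_entry (c : Fin d × Fin d) : ‖(U : Matrix (Fin d) (Fin d) ℂ).vec c‖ ≤ 1 :=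
    entry_norm_bound_of_unitary U.2 _ _
  rw [monomial, norm_mul, norm_prod, norm_prod]
  refine mul_le_one₀ (Finset.prod_le_one (fun _ _ => norm_nonneg _) fun k _ => h_entry _)
    (Finset.prod_nonneg fun _ _ => norm_nonneg _) (Finset.prod_le_one (fun _ _ => norm_nonneg _)
      fun k _ => (RCLike.norm_conj _).trans_le (h_entry _))

lemma continuous_monomial (x : MonomialIndex d t) : Continuous (monomial x) := by
  have h_entry (c : Fin d × Fin d) :
      Continuous fun U : UG d => (U : Matrix (Fin d) (Fin d) ℂ).vec c :=
    continuous_subtype_val.matrix_elem _ _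
  exact (continuous_finsetProd _ fun k _ => h_entry _).mul
    (continuous_finsetProd _ fun k _ => (h_entry _).star)

lemma integrable_monomial (μ : Measure (UG d)) [IsFiniteMeasure μ] (x : MonomialIndex d t) :
    Integrable (monomial x) μ :=
  .of_bound (continuous_monomial x).aestronglyMeasurable 1 (.of_forall (norm_monomial_le_one x))

def tensorVec (t : ℕ) (U : UG d) : EuclideanSpace ℂ (MonomialIndex d t) :=
  WithLp.toLp 2 fun x => monomial x U

lemma inner_tensorVec (U V : UG d) :
    ⟪tensorVec t U, tensorVec t V⟫_ℂ =
      (‖(star (U : Matrix (Fin d) (Fin d) ℂ) * (V : Matrix (Fin d) (Fin d) ℂ)).trace‖ ^ (2 * t) :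
        ℝ) := by
  set g : Fin d × Fin d → ℂ := fun c => conj ((U : Matrix (Fin d) (Fin d) ℂ).vec c) *
    (V : Matrix (Fin d) (Fin d) ℂ).vec c
  have h_trace : (star (U : Matrix (Fin d) (Fin d) ℂ) * (V : Matrix (Fin d) (Fin d) ℂ)).trace =
      ∑ c, g c := by
    rw [Matrix.star_eq_conjTranspose, ← Matrix.star_vec_dotProduct_vec, dotProduct]
    rfl
  calc ⟪tensorVec t U, tensorVec t V⟫_ℂ
      = ∑ x : MonomialIndex d t, (∏ k, g (x.1 k)) * ∏ k, conj (g (x.2 k)) := by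
        simp only [tensorVec, EuclideanSpace.inner_toLp_toLp, dotProduct]
        refine Finset.sum_congr rfl fun x _ => ?_
        simp only [monomial, g, Pi.star_apply, star_mul', Finset.prod_mul_distrib, map_mul,
          map_prod, Complex.star_def, Complex.conj_conj]
        ring
    _ = (∑ c, g c) ^ t * conj (∑ c, g c) ^ t := by
        rw [Fintype.sum_prod_type, Fintype.sum_pow, map_sum, Fintype.sum_pow, Finset.sum_mul_sum]
    _ = _ := by
        rw [← h_trace, ← mul_pow, Complex.mul_conj, pow_mul, Complex.sq_norm, Complex.ofReal_pow]

lemma integrable_tensorVec (μ : Measure (UG d)) [IsFiniteMeasure μ] :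
    Integrable (tensorVec t) μ :=
  integrable_piLp_iff.2 (integrable_monomial μ)

lemma average_tensorVec_eq_integral_iff (μ : Measure (UG d)) [IsFiniteMeasure μ]
    (X : Finset (UG d)) :
    (1 / (X.card : ℂ)) • ∑ U ∈ X, tensorVec t U = ∫ U, tensorVec t U ∂μ ↔
      ∀ x : MonomialIndex d t,
        (1 / (X.card : ℂ)) * ∑ U ∈ X, monomial x U = ∫ U, monomial x U ∂μ := by
  rw [PiLp.ext_iff]
  refine forall_congr' fun x => ?_
  rw [eval_integral_piLp (integrable_monomial μ)]
  simp [tensorVec]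

lemma integral_star_mul {E : Type*} [NormedAddCommGroup E] [NormedSpace ℝ E]
    (μ : Measure (UG d)) [μ.IsMulLeftInvariant] (f : Matrix (Fin d) (Fin d) ℂ → E) (U : UG d) :
    ∫ V, f (star (U : Matrix (Fin d) (Fin d) ℂ) * V) ∂μ = ∫ V, f V ∂μ :=
  integral_mul_left_eq_self (fun V : UG d => f V) U⁻¹

lemma inner_tensorVec_integral (μ : Measure (UG d)) [μ.IsMulLeftInvariant] [IsFiniteMeasure μ]
    (U : UG d) :
    ⟪tensorVec t U, ∫ V, tensorVec t V ∂μ⟫_ℂ =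
      (∫ W, ‖(W : Matrix (Fin d) (Fin d) ℂ).trace‖ ^ (2 * t) ∂μ : ℝ) := by
  rw [← integral_inner (integrable_tensorVec μ)]
  simp_rw [inner_tensorVec, integral_complex_ofReal]
  rw [integral_star_mul μ (fun M => ‖M.trace‖ ^ (2 * t))]

end UnitaryDesign

open UnitaryDesign

theorem stmt_1_general (d t : ℕ)
    (μ : Measure (UG d)) [μ.IsHaarMeasure] [IsProbabilityMeasure μ]
    (X : Finset (UG d)) (hX : X.Nonempty) :
    (1 / (X.card : ℝ) ^ 2) *
        ∑ U ∈ X, ∑ V ∈ X,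
          ‖(Matrix.trace (star (U : Matrix (Fin d) (Fin d) ℂ) *
            (V : Matrix (Fin d) (Fin d) ℂ)))‖ ^ (2 * t)
      = ∫ U, ‖(Matrix.trace (U : Matrix (Fin d) (Fin d) ℂ))‖ ^ (2 * t) ∂μ
    ↔ IsUnitaryDesign d t μ X := by
  have h_iff := average_eq_integral_iff (integrable_tensorVec (t := t) μ)
    (inner_tensorVec_integral μ) hX
  simp_rw [inner_tensorVec, RCLike.re_to_complex, Complex.ofReal_re] at h_iff
  rw [← h_iff, average_tensorVec_eq_integral_iff, IsUnitaryDesign, homSpace_eq_span_monomial,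
    forall_mem_span_average_eq_integral_iff (Set.forall_mem_range.2 (integrable_monomial μ)),
    Set.forall_mem_range, and_iff_right hX]

theorem stmt_1 (d t : ℕ) (hd : 1 ≤ d) (ht : 1 ≤ t)
    (μ : Measure (UG d)) [μ.IsHaarMeasure] [IsProbabilityMeasure μ]
    (X : Finset (UG d)) (hX : X.Nonempty) :
    (1 / (X.card : ℝ) ^ 2) *
        ∑ U ∈ X, ∑ V ∈ X,
          ‖(Matrix.trace (star (U : Matrix (Fin d) (Fin d) ℂ) *
            (V : Matrix (Fin d) (Fin d) ℂ)))‖ ^ (2 * t)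
      = ∫ U, ‖(Matrix.trace (U : Matrix (Fin d) (Fin d) ℂ))‖ ^ (2 * t) ∂μ
    ↔ IsUnitaryDesign d t μ X :=
  stmt_1_general d t μ X hX
end
end

section
/- For all nonnegative integers r and s, the dimension of Hom(r,s) for U(2) equals the binomial coefficient C(r+s+3, 3). -/
open MeasureTheory

noncomputable section

/-! For `U ∈ U(2)`, `U* = conj (det U) • adj U` and the `2 × 2` adjugate is a signed permutation of
the entries, so each `conj U_pq` is `± conj (det U)` times an entry of `U`. Hence `Hom(r,s)` is
`conj(det)^s` times the restriction to `U(2)` of the homogeneous polynomials of degree `r+s` in the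
four entries. This restriction is injective: by homogeneity a polynomial vanishing on `U(2)`
vanishes on all `!![a, b; -conj b, conj a]` with `a ≠ 0` (real multiples of unitaries), and in the
real coordinates of `a, b` these form a box with infinite sides. As `conj(det)` is a unit, the
dimension is the number `(r+s+3).choose 3` of monomials of degree `r+s` in four variables. -/

open MvPolynomial
open scoped Pointwise

namespace MvPolynomial

theorem IsHomogeneous.eval_smul {R σ : Type*} [CommSemiring R] {P : MvPolynomial σ R} {n : ℕ}
    (hP : P.IsHomogeneous n) (t : R) (x : σ → R) :
    eval (t • x) P = t ^ n * eval x P := by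
  rw [eval_eq, eval_eq, Finset.mul_sum]
  refine Finset.sum_congr rfl fun d hd => ?_
  simp only [Pi.smul_apply, smul_eq_mul, mul_pow, Finset.prod_mul_distrib,
    Finset.prod_pow_eq_pow_sum, ← hP.degree_eq_sum_deg_support hd]
  ring

theorem finrank_homogeneousSubmodule {K σ : Type*} [Field K] [Fintype σ] [DecidableEq σ] (n : ℕ) :
    Module.finrank K (homogeneousSubmodule σ K n) = (Fintype.card σ + n - 1).choose n := by
  have hset : {d : σ →₀ ℕ | d.degree = n} = ↑(Finset.univ.finsuppAntidiag n : Finset (σ →₀ ℕ)) := by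
    ext d
    simp [Finset.mem_finsuppAntidiag, Finsupp.degree_eq_sum]
  rw [homogeneousSubmodule_eq_finsupp_supported, hset,
    LinearEquiv.finrank_eq (AddMonoidAlgebra.supportedEquivFinsupp _), Module.finrank_finsupp_self]
  simp [Finset.card_finsuppAntidiag_nat_eq_choose]

end MvPolynomial

theorem Set.range_pow_eq_range_prod {M ι : Type*} [CommMonoid M] (g : ι → M) (n : ℕ) :
    Set.range g ^ n = Set.range fun f : Fin n → ι => ∏ k, g (f k) := by
  ext a
  rw [Set.mem_pow]
  constructor
  · rintro ⟨f, rfl⟩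
    choose i hi using fun k => (f k).2
    exact ⟨i, by simp [List.prod_ofFn, hi]⟩
  · rintro ⟨i, rfl⟩
    exact ⟨fun k => ⟨g (i k), Set.mem_range_self _⟩, by simp [List.prod_ofFn]⟩

theorem Submodule.finrank_span_singleton_mul_of_isUnit {K A : Type*} [Field K] [CommRing A]
    [Algebra K A] {u : A} (hu : IsUnit u) (M : Submodule K A) :
    Module.finrank K ↥(Submodule.span K {u} * M) = Module.finrank K M := by
  rw [Submodule.span_singleton_mul, Submodule.pointwise_smul_def]
  exact LinearEquiv.finrank_map_eq (DistribMulAction.toLinearEquiv K A hu.unit) M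

theorem Matrix.star_eq_star_det_smul_adjugate {n α : Type*} [Fintype n] [DecidableEq n]
    [CommRing α] [StarRing α] {U : Matrix n n α} (hU : U ∈ Matrix.unitaryGroup n α) :
    star U = star U.det • U.adjugate := by
  have hdet : star U.det * U.det = 1 := (Unitary.mem_iff.mp (Matrix.det_of_mem_unitary hU)).1
  have hUU : star U * U = 1 := (Unitary.mem_iff.mp hU).1
  symm
  calc star U.det • U.adjugate = star U.det • (star U * U * U.adjugate) := by rw [hUU, one_mul]
    _ = star U * (star U.det * U.det) • 1 := by
      rw [mul_assoc, Matrix.mul_adjugate, Matrix.mul_smul, Matrix.mul_smul, smul_smul]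
    _ = star U := by rw [hdet, one_smul, mul_one]

theorem Matrix.star_apply_fin_two_of_mem_unitaryGroup {α : Type*} [CommRing α] [StarRing α]
    {U : Matrix (Fin 2) (Fin 2) α} (hU : U ∈ Matrix.unitaryGroup (Fin 2) α) (p q : Fin 2) :
    star (U p q) = star U.det * if p = q then U p.rev q.rev else -U p.rev q.rev := by
  have h := congrFun₂ (Matrix.star_eq_star_det_smul_adjugate hU) q p
  rw [Matrix.star_apply, Matrix.smul_apply, smul_eq_mul, Matrix.adjugate_fin_two] at h
  rw [h]
  fin_cases p <;> fin_cases q <;> simp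

theorem Matrix.star_det_mul_apply_fin_two_of_mem_unitaryGroup {α : Type*} [CommRing α] [StarRing α]
    {U : Matrix (Fin 2) (Fin 2) α} (hU : U ∈ Matrix.unitaryGroup (Fin 2) α) (p q : Fin 2) :
    star U.det * U p q = if p = q then star (U p.rev q.rev) else -star (U p.rev q.rev) := by
  rw [Matrix.star_apply_fin_two_of_mem_unitaryGroup hU, Fin.rev_rev, Fin.rev_rev]
  by_cases h : p = q <;> simp [h]

theorem Matrix.exists_quaternion_eq_smul_mem_unitaryGroup {a : ℂ} (ha : a ≠ 0) (b : ℂ) :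
    ∃ ρ : ℂ, ∃ U ∈ Matrix.unitaryGroup (Fin 2) ℂ, !![a, b; -star b, star a] = ρ • U := by
  set M : Matrix (Fin 2) (Fin 2) ℂ := !![a, b; -star b, star a]
  have hN : 0 < ‖a‖ ^ 2 + ‖b‖ ^ 2 := by positivity
  set ρ : ℂ := ((√(‖a‖ ^ 2 + ‖b‖ ^ 2) : ℝ) : ℂ)
  have hρ : ρ ≠ 0 := by simp [ρ, Real.sqrt_eq_zero', not_le.2 hN]
  have hnorm : star ρ⁻¹ * ρ⁻¹ * (star a * a + star b * b) = 1 := by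
    have hsq : ρ * ρ = ((‖a‖ ^ 2 + ‖b‖ ^ 2 : ℝ) : ℂ) := by
      rw [← Complex.ofReal_mul, Real.mul_self_sqrt hN.le]
    rw [star_inv₀, Complex.star_def, Complex.conj_ofReal, ← mul_inv, hsq, Complex.conj_mul',
      Complex.conj_mul']
    push_cast
    exact inv_mul_cancel₀ (by exact_mod_cast hN.ne')
  refine ⟨ρ, ρ⁻¹ • M, ?_, by rw [smul_smul, mul_inv_cancel₀ hρ, one_smul]⟩
  rw [Matrix.mem_unitaryGroup_iff', star_smul, smul_mul_smul_comm]
  have hMM : star M * M = (star a * a + star b * b) • 1 := by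
    ext i j
    fin_cases i <;> fin_cases j <;> simp [M, Matrix.mul_apply] <;> ring
  rw [hMM, smul_smul, hnorm, one_smul]

namespace MvPolynomial

theorem eq_zero_of_eval_quaternion {P : MvPolynomial (Fin 2 × Fin 2) ℂ}
    (h : ∀ a b : ℂ, a ≠ 0 → eval (fun ij => !![a, b; -star b, star a] ij.1 ij.2) P = 0) :
    P = 0 := by
  -- `τ` writes `!![a, b; -conj b, conj a]` in the real coordinates `a = y₀ + i y₁`,
  -- `b = y₂ + i y₃`: an invertible linear change of variables (inverted by `y` below).
  set τ : Fin 2 × Fin 2 → MvPolynomial (Fin 4) ℂ :=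
    fun ij => !![X 0 + C Complex.I * X 1, X 2 + C Complex.I * X 3;
      -X 2 + C Complex.I * X 3, X 0 - C Complex.I * X 1] ij.1 ij.2
  have eval_bind : ∀ y, eval y (bind₁ τ P) = eval (fun ij => eval y (τ ij)) P := fun y =>
    eval₂Hom_bind₁ _ _ _ _
  have hτ : bind₁ τ P = 0 := by
    refine funext_set (fun _ => Complex.ofReal '' Set.Ioi 0)
      (fun _ => (Set.Ioi_infinite 0).image Complex.ofReal_injective.injOn) fun y hy => ?_
    choose t ht hty using fun i => hy i (Set.mem_univ i)
    rw [map_zero, eval_bind]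
    have hyτ : (fun ij => eval y (τ ij)) = fun ij =>
        !![y 0 + Complex.I * y 1, y 2 + Complex.I * y 3;
          -star (y 2 + Complex.I * y 3), star (y 0 + Complex.I * y 1)] ij.1 ij.2 := by
      funext ⟨i, j⟩
      fin_cases i <;> fin_cases j <;> simp [τ, ← hty, Complex.conj_ofReal] <;> ring
    rw [hyτ]
    refine h _ _ fun h0 => (Set.mem_Ioi.1 (ht 0)).ne' ?_
    simpa [← hty] using congrArg Complex.re h0
  refine MvPolynomial.funext fun x => ?_
  set y : Fin 4 → ℂ := ![(x (0, 0) + x (1, 1)) / 2, (x (0, 0) - x (1, 1)) / (2 * Complex.I),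
    (x (0, 1) - x (1, 0)) / 2, (x (0, 1) + x (1, 0)) / (2 * Complex.I)]
  have hy : (fun ij => eval y (τ ij)) = x := by
    ext ⟨i, j⟩
    fin_cases i <;> fin_cases j <;> simp [τ, y] <;> field_simp <;> ring
  rw [← hy, ← eval_bind, hτ, map_zero, map_zero]

theorem IsHomogeneous.eq_zero_of_eval_unitaryGroup_fin_two {P : MvPolynomial (Fin 2 × Fin 2) ℂ}
    {n : ℕ} (hP : P.IsHomogeneous n)
    (h : ∀ U ∈ Matrix.unitaryGroup (Fin 2) ℂ, eval (fun ij => U ij.1 ij.2) P = 0) : P = 0 :=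
  eq_zero_of_eval_quaternion fun a b ha => by
    obtain ⟨ρ, U, hU, hM⟩ := Matrix.exists_quaternion_eq_smul_mem_unitaryGroup ha b
    rw [hM]
    show eval (ρ • fun ij : Fin 2 × Fin 2 => U ij.1 ij.2) P = 0
    rw [hP.eval_smul, h U hU, mul_zero]

end MvPolynomial

section UnitaryGroupFunctions

variable (d : ℕ)

def entryFun (ij : Fin d × Fin d) (U : UG d) : ℂ := (U : Matrix (Fin d) (Fin d) ℂ) ij.1 ij.2

def entryEval : MvPolynomial (Fin d × Fin d) ℂ →ₐ[ℂ] (UG d → ℂ) := aeval (entryFun d)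

def entrySpan : Submodule ℂ (UG d → ℂ) := Submodule.span ℂ (Set.range (entryFun d))

def conjEntrySpan : Submodule ℂ (UG d → ℂ) :=
  Submodule.span ℂ (Set.range fun ij U => starRingEnd ℂ (entryFun d ij U))

def conjDet : UG d → ℂ := fun U => starRingEnd ℂ (U : Matrix (Fin d) (Fin d) ℂ).det

variable {d}

theorem entryEval_apply (P : MvPolynomial (Fin d × Fin d) ℂ) (U : UG d) :
    entryEval d P U = eval (fun ij => (U : Matrix (Fin d) (Fin d) ℂ) ij.1 ij.2) P := by
  rw [← coe_aeval_eq_eval, entryEval, ← Pi.evalAlgHom_apply ℂ (fun _ => ℂ) U (aeval _ P),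
    ← AlgHom.comp_apply, comp_aeval]
  rfl

theorem isUnit_conjDet : IsUnit (conjDet d) :=
  IsUnit.of_mul_eq_one (fun U : UG d => (U : Matrix (Fin d) (Fin d) ℂ).det) <| funext fun U =>
    (Unitary.mem_iff.mp (Matrix.det_of_mem_unitary U.2)).1

theorem homSpace_eq_entrySpan_pow_mul (r s : ℕ) :
    homSpace d r s = entrySpan d ^ r * conjEntrySpan d ^ s := by
  rw [entrySpan, conjEntrySpan, Submodule.span_pow, Submodule.span_pow, Submodule.span_mul_span,
    Set.range_pow_eq_range_prod, Set.range_pow_eq_range_prod, homSpace]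
  congr 1
  ext f
  simp only [Set.mem_ofPred_eq, Set.mem_mul, Set.mem_range]
  constructor
  · rintro ⟨i, j, p, q, rfl⟩
    exact ⟨_, ⟨fun k => (i k, j k), rfl⟩, _, ⟨fun k => (p k, q k), rfl⟩,
      funext fun U => by simp [Finset.prod_apply, entryFun]⟩
  · rintro ⟨_, ⟨f, rfl⟩, _, ⟨g, rfl⟩, rfl⟩
    exact ⟨fun k => (f k).1, fun k => (f k).2, fun k => (g k).1, fun k => (g k).2,
      funext fun U => by simp [Finset.prod_apply, entryFun]⟩

theorem entrySpan_pow (n : ℕ) :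
    entrySpan d ^ n = (homogeneousSubmodule (Fin d × Fin d) ℂ n).map (entryEval d).toLinearMap := by
  have hX : (entryEval d).toLinearMap ∘ X = entryFun d := funext fun ij => by simp [entryEval]
  rw [← homogeneousSubmodule_one_pow, Submodule.map_pow, homogeneousSubmodule_one_eq_span_X,
    Submodule.map_span, ← Set.range_comp, hX, entrySpan]

theorem conjEntrySpan_two : conjEntrySpan 2 = Submodule.span ℂ {conjDet 2} * entrySpan 2 := by
  apply le_antisymm
  · rw [conjEntrySpan, Submodule.span_le]
    rintro _ ⟨⟨p, q⟩, rfl⟩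
    rw [SetLike.mem_coe, Submodule.mem_span_singleton_mul]
    refine ⟨if p = q then entryFun 2 (p.rev, q.rev) else -entryFun 2 (p.rev, q.rev), ?_, ?_⟩
    · split_ifs
      exacts [Submodule.subset_span ⟨_, rfl⟩, neg_mem (Submodule.subset_span ⟨_, rfl⟩)]
    · funext U
      simp only [entryFun, starRingEnd_apply, Matrix.star_apply_fin_two_of_mem_unitaryGroup U.2]
      split_ifs <;> simp [conjDet, entryFun]
  · rw [Submodule.span_singleton_mul, entrySpan, Submodule.smul_span, Submodule.span_le]
    rintro _ ⟨_, ⟨⟨p, q⟩, rfl⟩, rfl⟩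
    set conjEntry : UG 2 → ℂ := fun U => starRingEnd ℂ (entryFun 2 (p.rev, q.rev) U)
    have hmem : conjEntry ∈ conjEntrySpan 2 := Submodule.subset_span ⟨_, rfl⟩
    have hsmul : conjDet 2 • entryFun 2 (p, q) = if p = q then conjEntry else -conjEntry := by
      funext U
      have := Matrix.star_det_mul_apply_fin_two_of_mem_unitaryGroup U.2 p q
      split_ifs at this ⊢ <;> simpa [conjEntry, entryFun, conjDet] using this
    show conjDet 2 • entryFun 2 (p, q) ∈ conjEntrySpan 2
    rw [hsmul]
    split_ifs
    exacts [hmem, neg_mem hmem]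

theorem finrank_entrySpan_two_pow (n : ℕ) :
    Module.finrank ℂ ↥(entrySpan 2 ^ n) = (n + 3).choose 3 := by
  have hinj : Function.Injective
      ((entryEval 2).toLinearMap.domRestrict (homogeneousSubmodule (Fin 2 × Fin 2) ℂ n)) := by
    intro P Q hPQ
    refine Subtype.ext (sub_eq_zero.1 ((P.2.sub Q.2).eq_zero_of_eval_unitaryGroup_fin_two
      fun U hU => ?_))
    have := congrFun hPQ ⟨U, hU⟩
    simp only [LinearMap.domRestrict_apply, AlgHom.toLinearMap_apply, entryEval_apply] at this
    rw [map_sub, this, sub_self]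
  rw [entrySpan_pow, ← LinearMap.range_domRestrict, LinearMap.finrank_range_of_inj hinj,
    finrank_homogeneousSubmodule, Fintype.card_prod, Fintype.card_fin,
    show 2 * 2 + n - 1 = n + 3 by omega, Nat.choose_symm_add]

end UnitaryGroupFunctions

theorem stmt_5 (r s : ℕ) :
    Module.finrank ℂ (homSpace 2 r s) = (r + s + 3).choose 3 := by
  have hHom : homSpace 2 r s = Submodule.span ℂ {conjDet 2 ^ s} * entrySpan 2 ^ (r + s) := by
    rw [homSpace_eq_entrySpan_pow_mul, conjEntrySpan_two, mul_pow, pow_add,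
      ← Submodule.spanSingleton_apply, ← Submodule.spanSingleton_apply, map_pow]
    ring
  rw [hHom, Submodule.finrank_span_singleton_mul_of_isUnit (isUnit_conjDet.pow s),
    finrank_entrySpan_two_pow]
end
end

section
/- If X is a unitary t-design in U(d) (t ≥ 1), then |X| ≥ C(d²+t−1, t), the binomial coefficient counting monomials of degree t in d² variables. -/
open MeasureTheory

noncomputable section

/-!
Homogeneous polynomials of degree `t` in the `d²` matrix entries form a space of dimension
`C(d² + t - 1, t)`. If such a `p` vanishes on a `t`-design `X`, then `|p|² ∈ Hom(t,t)` averages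
to `0` over `X`, so `∫ |p(U)|² dU = 0` and `p` vanishes on all of `U(d)`. Then `p = 0`: the
Cayley transform `C(M) = (1 - M)(1 + M)⁻¹` maps `i·(Hermitian)` into `U(d)`, and homogeneity
clears its denominator, so `N ↦ p((1 - N) adj(1 + N))` is a polynomial vanishing on
`i·(Hermitian)`, a real form of all matrices, hence identically; as `C` is an involution, `p`
vanishes wherever `det(1 + M) ≠ 0`. So restricting to `X` is injective on this space, and `|X|`
bounds its dimension.
-/

open MvPolynomial Matrix Complex
open scoped Pointwise ComplexOrder

theorem MvPolynomial.IsHomogeneous.eval_smul_s8 {σ R : Type*} [CommSemiring R]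
    {φ : MvPolynomial σ R} {n : ℕ} (hφ : φ.IsHomogeneous n) (c : R) (x : σ → R) :
    eval (c • x) φ = c ^ n * eval x φ := by
  rw [eval_eq, eval_eq, Finset.mul_sum]
  refine Finset.sum_congr rfl fun m hm => ?_
  simp_rw [Pi.smul_apply, smul_eq_mul, mul_pow, Finset.prod_mul_distrib,
    Finset.prod_pow_eq_pow_sum, ← hφ.degree_eq_sum_deg_support hm]
  ring

theorem MvPolynomial.eq_zero_of_eval_eq_zero_of_eval_ne_zero {σ R : Type*} [CommRing R]
    [IsDomain R] [Infinite R] {p g : MvPolynomial σ R} (hg : g ≠ 0)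
    (h : ∀ x, eval x g ≠ 0 → eval x p = 0) : p = 0 := by
  refine (mul_eq_zero.mp (MvPolynomial.funext fun x => ?_)).resolve_right hg
  by_cases hx : eval x g = 0 <;> simp [hx, h]

theorem MvPolynomial.finrank_homogeneousSubmodule_s8 {σ K : Type*} [Fintype σ] [DecidableEq σ]
    [Field K] (n : ℕ) :
    Module.finrank K (homogeneousSubmodule σ K n) = (Fintype.card σ).multichoose n := by
  let e : {m : σ →₀ ℕ | m.degree = n} ≃ Sym σ n :=
    ((Sym.equivNatSum σ n).trans (Equiv.subtypeEquivRight fun _ => Iff.rfl)).symm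
  rw [homogeneousSubmodule_eq_finsupp_supported,
    ((AddMonoidAlgebra.supportedEquivFinsupp _).trans (Finsupp.domLCongr e)).finrank_eq,
    Module.finrank_finsupp_self, Sym.card_sym_eq_multichoose]

namespace Matrix

theorem conjTranspose_mul_inv_mem_unitaryGroup {n α : Type*} [Fintype n] [DecidableEq n]
    [CommRing α] [StarRing α] {P : Matrix n n α} (hP : IsUnit P.det) (hPn : Commute P Pᴴ) :
    Pᴴ * P⁻¹ ∈ unitaryGroup n α := by
  have hPs : IsUnit Pᴴ.det := by rw [det_conjTranspose]; exact hP.star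
  rw [mem_unitaryGroup_iff, star_eq_conjTranspose, conjTranspose_mul, conjTranspose_nonsing_inv,
    conjTranspose_conjTranspose, mul_assoc, ← mul_assoc P⁻¹, ← mul_inv_rev, ← hPn.eq,
    mul_inv_rev, mul_assoc, nonsing_inv_mul _ hP, mul_one, mul_nonsing_inv _ hPs]

theorem isClosed_unitaryGroup {n 𝕜 : Type*} [Fintype n] [DecidableEq n] [RCLike 𝕜] :
    IsClosed (unitaryGroup n 𝕜 : Set (Matrix n n 𝕜)) := by
  have : (unitaryGroup n 𝕜 : Set (Matrix n n 𝕜)) = (fun A => A * star A) ⁻¹' {1} := by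
    ext A; exact mem_unitaryGroup_iff
  rw [this]
  exact isClosed_singleton.preimage (continuous_id.matrix_mul continuous_star)

instance {n 𝕜 : Type*} [Fintype n] [DecidableEq n] [RCLike 𝕜] :
    CompactSpace (unitaryGroup n 𝕜) :=
  isCompact_iff_compactSpace.mp <|
    (isCompact_univ_pi fun _ => isCompact_univ_pi fun _ => isCompact_closedBall (0 : 𝕜) 1)
      |>.of_isClosed_subset isClosed_unitaryGroup fun U hU i _ j _ => by
        simpa using entry_norm_bound_of_unitary hU i j

section Cayley

variable {n K : Type*} [Fintype n] [DecidableEq n] [Field K]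

def cayley (M : Matrix n n K) : Matrix n n K := (1 - M) * (1 + M)⁻¹

theorem one_sub_mul_adjugate_one_add {M : Matrix n n K} (hM : IsUnit (1 + M).det) :
    (1 - M) * adjugate (1 + M) = (1 + M).det • cayley M := by
  rw [cayley, ← mul_smul_comm, inv_def, smul_smul, Ring.mul_inverse_cancel _ hM, one_smul]

theorem one_add_cayley {M : Matrix n n K} (hM : IsUnit (1 + M).det) :
    1 + cayley M = (2 : K) • (1 + M)⁻¹ := by
  conv_lhs => rw [← mul_nonsing_inv _ hM]
  rw [cayley, ← add_mul, add_add_sub_cancel, ← one_add_one_eq_two, add_smul, one_smul, add_mul,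
    one_mul]

theorem one_sub_cayley {M : Matrix n n K} (hM : IsUnit (1 + M).det) :
    1 - cayley M = (2 : K) • (M * (1 + M)⁻¹) := by
  conv_lhs => rw [← mul_nonsing_inv _ hM]
  rw [cayley, ← sub_mul, add_sub_sub_cancel, ← one_add_one_eq_two, add_smul, one_smul, add_mul]

variable [NeZero (2 : K)]

theorem isUnit_det_one_add_cayley {M : Matrix n n K} (hM : IsUnit (1 + M).det) :
    IsUnit (1 + cayley M).det := by
  rw [one_add_cayley hM, det_smul]
  exact ((Ne.isUnit two_ne_zero).pow _).mul (isUnit_nonsing_inv_det _ hM)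

theorem cayley_cayley {M : Matrix n n K} (hM : IsUnit (1 + M).det) : cayley (cayley M) = M := by
  have h : M * (1 + cayley M) = 1 - cayley M := by
    rw [one_add_cayley hM, one_sub_cayley hM, mul_smul_comm]
  rw [cayley, ← h, mul_assoc, mul_nonsing_inv _ (isUnit_det_one_add_cayley hM), mul_one]

end Cayley

section Hermitian

variable {n : Type*} [DecidableEq n] {A : Matrix n n ℂ}

theorem IsHermitian.conjTranspose_one_add_I_smul (hA : A.IsHermitian) :
    (1 + I • A)ᴴ = 1 - I • A := by
  rw [conjTranspose_add, conjTranspose_one, conjTranspose_smul, hA.eq, star_def, conj_I, neg_smul,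
    sub_eq_add_neg]

variable [Fintype n]

theorem IsHermitian.isUnit_det_one_add_I_smul (hA : A.IsHermitian) : IsUnit (1 + I • A).det := by
  have hprod : (1 + I • A)ᴴ * (1 + I • A) = 1 + Aᴴ * A := by
    rw [hA.conjTranspose_one_add_I_smul, hA.eq]
    simp only [sub_mul, mul_add, one_mul, mul_one, smul_mul_smul, I_mul_I, neg_smul, one_smul]
    abel
  have hunit := (PosDef.one.add_posSemidef (posSemidef_conjTranspose_mul_self A)).isUnit
  rw [← hprod, isUnit_iff_isUnit_det, det_mul] at hunit
  exact isUnit_of_mul_isUnit_right hunit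

theorem IsHermitian.cayley_I_smul_mem_unitaryGroup (hA : A.IsHermitian) :
    cayley (I • A) ∈ unitaryGroup n ℂ := by
  have hcomm : Commute (1 + I • A) (1 + I • A)ᴴ := by
    rw [hA.conjTranspose_one_add_I_smul]
    exact (Commute.one_left _).add_left ((Commute.one_right _).sub_right (Commute.refl _))
  rw [cayley, ← hA.conjTranspose_one_add_I_smul]
  exact conjTranspose_mul_inv_mem_unitaryGroup hA.isUnit_det_one_add_I_smul hcomm

end Hermitian

end Matrix

namespace MvPolynomial

section evalMatrix

variable {n R : Type*} [CommSemiring R]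

def evalMatrix (M : Matrix n n R) : MvPolynomial (n × n) R →+* R :=
  eval fun ij => M ij.1 ij.2

theorem evalMatrix_bind₁ (F : Matrix n n (MvPolynomial (n × n) R)) (M : Matrix n n R)
    (p : MvPolynomial (n × n) R) :
    evalMatrix M (bind₁ (fun ij => F ij.1 ij.2) p) = evalMatrix (F.map (evalMatrix M)) p :=
  eval₂Hom_bind₁ _ _ _ _

theorem IsHomogeneous.evalMatrix_smul {p : MvPolynomial (n × n) R} {t : ℕ}
    (hp : p.IsHomogeneous t) (c : R) (M : Matrix n n R) :
    evalMatrix (c • M) p = c ^ t * evalMatrix M p :=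
  hp.eval_smul_s8 c _

theorem evalMatrix_mvPolynomialX_map [Fintype n] [DecidableEq n] (M : Matrix n n R) :
    (mvPolynomialX n n R).map (evalMatrix M) = M :=
  mvPolynomialX_map_eval₂ _ M

end evalMatrix

variable {n : Type*}

theorem eq_zero_of_forall_isHermitian {q : MvPolynomial (n × n) ℂ}
    (h : ∀ A : Matrix n n ℂ, A.IsHermitian → evalMatrix A q = 0) : q = 0 := by
  -- `M ↦ (1 + i) M + (1 - i) Mᵀ` is a linear bijection taking real matrices to Hermitian ones
  let H : Matrix n n ℂ → Matrix n n ℂ := fun M => (1 + I) • M + (1 - I) • Mᵀ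
  let Xm := mvPolynomialX n n ℂ
  have hHX (M : Matrix n n ℂ) :
      ((1 + I) • Xm + (1 - I) • Xmᵀ).map (evalMatrix M) = H M := by
    ext i j; simp [Xm, H, evalMatrix]
  have hreal : bind₁ (fun ij => ((1 + I) • Xm + (1 - I) • Xmᵀ) ij.1 ij.2) q = 0 := by
    refine funext_set (fun _ => Set.range ((↑) : ℝ → ℂ))
      (fun _ => Set.infinite_range_of_injective ofReal_injective) fun x hx => ?_
    change evalMatrix (of fun i j => x (i, j)) _ = evalMatrix (of fun i j => x (i, j)) 0
    rw [evalMatrix_bind₁, hHX, map_zero]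
    refine h _ (IsHermitian.ext fun i j => ?_)
    obtain ⟨a, ha⟩ := hx (i, j) trivial
    obtain ⟨b, hb⟩ := hx (j, i) trivial
    simp only [H, Matrix.add_apply, Matrix.smul_apply, transpose_apply, of_apply, ← ha, ← hb,
      smul_eq_mul, star_def, map_add, map_mul, map_sub, map_one, conj_I, conj_ofReal]
    ring
  refine MvPolynomial.funext fun x => ?_
  let A : Matrix n n ℂ := of fun i j => x (i, j)
  have hA : H ((4 * I)⁻¹ • ((1 + I) • A - (1 - I) • Aᵀ)) = A := by
    ext i j
    simp only [H, Matrix.add_apply, Matrix.smul_apply, Matrix.sub_apply, transpose_apply,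
      smul_eq_mul]
    field_simp
    ring
  have := congrArg (evalMatrix ((4 * I)⁻¹ • ((1 + I) • A - (1 - I) • Aᵀ))) hreal
  rwa [evalMatrix_bind₁, hHX, hA, map_zero] at this

variable [Fintype n] [DecidableEq n] {p : MvPolynomial (n × n) ℂ} {t : ℕ}

theorem IsHomogeneous.evalMatrix_one_sub_mul_adjugate (hp : p.IsHomogeneous t)
    {M : Matrix n n ℂ} (hM : IsUnit (1 + M).det) :
    evalMatrix ((1 - M) * adjugate (1 + M)) p = (1 + M).det ^ t * evalMatrix (cayley M) p := by
  rw [← hp.evalMatrix_smul, one_sub_mul_adjugate_one_add hM]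

theorem IsHomogeneous.evalMatrix_one_sub_mul_adjugate_eq_zero (hp : p.IsHomogeneous t)
    (hU : ∀ U ∈ unitaryGroup n ℂ, evalMatrix U p = 0) (N : Matrix n n ℂ) :
    evalMatrix ((1 - N) * adjugate (1 + N)) p = 0 := by
  let K := (1 - I • mvPolynomialX n n ℂ) * adjugate (1 + I • mvPolynomialX n n ℂ)
  have hK (M : Matrix n n ℂ) : K.map (evalMatrix M) = (1 - I • M) * adjugate (1 + I • M) := by
    rw [show ⇑(evalMatrix M) = MvPolynomial.aeval fun ij : n × n => M ij.1 ij.2 from rfl,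
      ← AlgHom.mapMatrix_apply, map_mul, map_sub, map_one, AlgHom.map_adjugate, map_add, map_one,
      map_smul, mvPolynomialX_mapMatrix_aeval]
  have hK0 : bind₁ (fun ij => K ij.1 ij.2) p = 0 := by
    refine eq_zero_of_forall_isHermitian fun A hA => ?_
    rw [evalMatrix_bind₁, hK, hp.evalMatrix_one_sub_mul_adjugate hA.isUnit_det_one_add_I_smul,
      hU _ hA.cayley_I_smul_mem_unitaryGroup, mul_zero]
  have := congrArg (evalMatrix ((-I) • N)) hK0
  rwa [evalMatrix_bind₁, hK, smul_smul, mul_neg, I_mul_I, neg_neg, one_smul, map_zero] at this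

theorem IsHomogeneous.evalMatrix_eq_zero_of_isUnit_det_one_add (hp : p.IsHomogeneous t)
    (hU : ∀ U ∈ unitaryGroup n ℂ, evalMatrix U p = 0) {M : Matrix n n ℂ}
    (hM : IsUnit (1 + M).det) : evalMatrix M p = 0 := by
  have hC := isUnit_det_one_add_cayley hM
  have := hp.evalMatrix_one_sub_mul_adjugate_eq_zero hU (cayley M)
  rw [hp.evalMatrix_one_sub_mul_adjugate hC, cayley_cayley hM] at this
  exact (mul_eq_zero.mp this).resolve_left (pow_ne_zero _ hC.ne_zero)

theorem IsHomogeneous.eq_zero_of_forall_mem_unitaryGroup (hp : p.IsHomogeneous t)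
    (hU : ∀ U ∈ unitaryGroup n ℂ, evalMatrix U p = 0) : p = 0 := by
  have hdet (M : Matrix n n ℂ) : evalMatrix M (1 + mvPolynomialX n n ℂ).det = (1 + M).det := by
    rw [RingHom.map_det, map_add, map_one, RingHom.mapMatrix_apply, evalMatrix_mvPolynomialX_map]
  refine eq_zero_of_eval_eq_zero_of_eval_ne_zero (g := (1 + mvPolynomialX n n ℂ).det) ?_
    fun x hx => hp.evalMatrix_eq_zero_of_isUnit_det_one_add hU (M := of fun i j => x (i, j)) ?_
  · intro h0
    simpa [hdet] using congrArg (evalMatrix 0) h0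
  · rw [← hdet]
    exact hx.isUnit

end MvPolynomial

namespace UG

variable {d t : ℕ}

def entry (d : ℕ) (ij : Fin d × Fin d) (U : UG d) : ℂ :=
  (U : Matrix (Fin d) (Fin d) ℂ) ij.1 ij.2

theorem exists_eq_prod_of_mem_range_entry_pow {r : ℕ} {f : UG d → ℂ}
    (hf : f ∈ Set.range (entry d) ^ r) :
    ∃ i j : Fin r → Fin d,
      f = fun U : UG d => ∏ k, (U : Matrix (Fin d) (Fin d) ℂ) (i k) (j k) := by
  obtain ⟨g, hg, rfl⟩ := Set.mem_pow_iff_prod.mp hf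
  choose ij hij using hg
  refine ⟨fun k => (ij k).1, fun k => (ij k).2, ?_⟩
  ext U
  simp [Finset.prod_apply, ← hij, entry]

theorem mul_star_mem_homSpace {r s : ℕ} {f g : UG d → ℂ}
    (hf : f ∈ Submodule.span ℂ (Set.range (entry d) ^ r))
    (hg : g ∈ Submodule.span ℂ (Set.range (entry d) ^ s)) :
    f * star g ∈ homSpace d r s := by
  induction hf using Submodule.span_induction with
  | mem f hf =>
    induction hg using Submodule.span_induction with
    | mem g hg =>
      obtain ⟨i, j, rfl⟩ := exists_eq_prod_of_mem_range_entry_pow hf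
      obtain ⟨p, q, rfl⟩ := exists_eq_prod_of_mem_range_entry_pow hg
      refine Submodule.subset_span ⟨i, j, p, q, ?_⟩
      ext U; simp
    | zero => simp
    | add g₁ g₂ _ _ h₁ h₂ => rw [star_add, mul_add]; exact add_mem h₁ h₂
    | smul c g _ h => rw [star_smul, mul_smul_comm]; exact Submodule.smul_mem _ _ h
  | zero => simp
  | add f₁ f₂ _ _ h₁ h₂ => rw [add_mul]; exact add_mem h₁ h₂
  | smul c f _ h => rw [smul_mul_assoc]; exact Submodule.smul_mem _ _ h

theorem aeval_entry_apply (p : MvPolynomial (Fin d × Fin d) ℂ) (U : UG d) :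
    aeval (entry d) p U = evalMatrix (U : Matrix (Fin d) (Fin d) ℂ) p := by
  change Pi.evalAlgHom ℂ (fun _ => ℂ) U (aeval (entry d) p) = _
  rw [← AlgHom.comp_apply, comp_aeval]
  rfl

theorem continuous_aeval_entry (p : MvPolynomial (Fin d × Fin d) ℂ) :
    Continuous (aeval (entry d) p) := by
  rw [show aeval (entry d) p = _ from funext (aeval_entry_apply p)]
  exact (continuous_eval p).comp <| continuous_pi fun ij =>
    (continuous_apply_apply ij.1 ij.2).comp continuous_subtype_val

theorem aeval_entry_mem_span_pow {p : MvPolynomial (Fin d × Fin d) ℂ} (hp : p.IsHomogeneous t) :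
    aeval (entry d) p ∈ Submodule.span ℂ (Set.range (entry d) ^ t) := by
  have : (homogeneousSubmodule _ ℂ t).map (aeval (entry d)).toLinearMap
      = Submodule.span ℂ (Set.range (entry d) ^ t) := by
    rw [← homogeneousSubmodule_one_pow, Submodule.map_pow, homogeneousSubmodule_one_eq_span_X,
      Submodule.map_span, ← Set.range_comp]
    simp [Function.comp_def, Submodule.span_pow]
  exact this ▸ Submodule.mem_map_of_mem hp

end UG

namespace IsUnitaryDesign

variable {d t : ℕ} {μ : Measure (UG d)} [μ.IsHaarMeasure] {X : Finset (UG d)}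

theorem eq_zero_of_forall_mem (hX : IsUnitaryDesign d t μ X) {f : UG d → ℂ}
    (hf : f ∈ Submodule.span ℂ (Set.range (UG.entry d) ^ t)) (hfc : Continuous f)
    (hfX : ∀ U ∈ X, f U = 0) : f = 0 := by
  have hnormSq : ∀ U, (f * star f) U = (normSq (f U) : ℂ) := fun U => mul_conj (f U)
  have hint : ∫ U, normSq (f U) ∂μ = 0 := by
    have hsum : ∑ U ∈ X, (f * star f) U = 0 :=
      Finset.sum_eq_zero fun U hU => by rw [Pi.mul_apply, hfX U hU, zero_mul]
    have := hX.2 _ (UG.mul_star_mem_homSpace hf hf)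
    rw [hsum, mul_zero, integral_congr_ae (.of_forall hnormSq), integral_complex_ofReal] at this
    exact_mod_cast this.symm
  by_contra hne
  obtain ⟨U, hU⟩ := Function.ne_iff.mp hne
  refine (Continuous.integral_pos_of_hasCompactSupport_nonneg_nonzero (x := U)
    (continuous_normSq.comp hfc) (.of_compactSpace _) (fun _ => normSq_nonneg _) ?_).ne' hint
  simpa using hU

theorem finrank_homogeneousSubmodule_le_card (hX : IsUnitaryDesign d t μ X) :
    Module.finrank ℂ (homogeneousSubmodule (Fin d × Fin d) ℂ t) ≤ X.card := by
  let restrict : homogeneousSubmodule (Fin d × Fin d) ℂ t →ₗ[ℂ] (X → ℂ) :=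
    LinearMap.funLeft ℂ ℂ ((↑) : X → UG d) ∘ₗ (aeval (UG.entry d)).toLinearMap ∘ₗ
      Submodule.subtype _
  have hinj : Function.Injective restrict := by
    refine (injective_iff_map_eq_zero restrict).mpr fun ⟨p, hp⟩ h0 => Subtype.ext ?_
    have hf := hX.eq_zero_of_forall_mem (UG.aeval_entry_mem_span_pow hp)
      (UG.continuous_aeval_entry p) fun U hU => congrFun h0 ⟨U, hU⟩
    exact hp.eq_zero_of_forall_mem_unitaryGroup fun U hU => by
      rw [← UG.aeval_entry_apply p ⟨U, hU⟩, hf, Pi.zero_apply]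
  simpa using LinearMap.finrank_le_finrank_of_injective hinj

end IsUnitaryDesign

theorem stmt_8_general (d t : ℕ)
    (μ : Measure (UG d)) [μ.IsHaarMeasure]
    (X : Finset (UG d)) (hX : IsUnitaryDesign d t μ X) :
    (d ^ 2 + t - 1).choose t ≤ X.card := by
  have h := hX.finrank_homogeneousSubmodule_le_card
  rwa [finrank_homogeneousSubmodule_s8, Fintype.card_prod, Fintype.card_fin, ← sq,
    Nat.multichoose_eq] at h

theorem stmt_8 (d t : ℕ) (ht : 1 ≤ t)
    (μ : Measure (UG d)) [μ.IsHaarMeasure] [IsProbabilityMeasure μ]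
    (X : Finset (UG d)) (hX : IsUnitaryDesign d t μ X) :
    (d ^ 2 + t - 1).choose t ≤ X.card :=
  stmt_8_general d t μ X hX
end
end
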